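/- The topology of the metric hedgehog MJ(κ) is finer than the topology of the compact hedgehog ΛJ(κ), and the two topologies coincide if and only if κ < ℵ₀. -/

import Mathlib

open Set Topology Cardinal

universe u v

/-- The equivalence relation on `[0,1] × I` identifying all points with first coordinate `0`. -/
def hedgehogSetoid (I : Type u) : Setoid (Set.Icc (0:ℝ) 1 × I) where
  r p q := ((p.1 : ℝ) = 0 ∧ (q.1 : ℝ) = 0) ∨ p = q
  iseqv := by
    refine ⟨fun p => Or.inr rfl, ?_, ?_⟩
    · rintro p q (⟨h1, h2⟩ | rfl)
      · exact Or.inl ⟨h2, h1⟩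
      · exact Or.inr rfl
    · rintro p q r (⟨h1, h2⟩ | rfl) hqr
      · rcases hqr with ⟨h3, h4⟩ | rfl
        · exact Or.inl ⟨h1, h4⟩
        · exact Or.inl ⟨h1, h2⟩
      · exact hqr

/-- The hedgehog with spines indexed by `I`, as a set (quotient of `[0,1] × I`). -/
abbrev Hedgehog (I : Type u) := Quotient (hedgehogSetoid I)

/-- The product topology on `[0,1] × I`, where `[0,1]` carries the usual topology and
`I` carries the discrete topology. -/
def hedgehogBaseTop (I : Type u) : TopologicalSpace (Set.Icc (0:ℝ) 1 × I) :=
  @instTopologicalSpaceProd _ _ inferInstance ⊥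

/-- The quotient topology on the hedgehog: the quotient hedgehog `J(κ)`. -/
def quotHedgehogTop (I : Type u) : TopologicalSpace (Hedgehog I) :=
  TopologicalSpace.coinduced (Quotient.mk (hedgehogSetoid I)) (hedgehogBaseTop I)

/-- The projection `π_κ : J(κ) → [0,1]`, sending `(t, j)` to `t`. -/
def hedgehogPiKappa {I : Type u} : Hedgehog I → Set.Icc (0:ℝ) 1 :=
  Quotient.lift Prod.fst (by
    rintro p q (⟨h1, h2⟩ | rfl)
    · exact Subtype.ext (h1.trans h2.symm)
    · rfl)

open Classical in
/-- The projection `π_i : J(κ) → [0,1]`, sending `(t, j)` to `t` if `j = i` and to `0`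
otherwise. -/
noncomputable def hedgehogProj {I : Type u} (i : I) : Hedgehog I → Set.Icc (0:ℝ) 1 :=
  Quotient.lift (fun p => if p.2 = i then p.1 else ⟨0, by norm_num⟩) (by
    rintro p q (⟨h1, h2⟩ | rfl)
    · have hp : p.1 = (⟨0, by norm_num⟩ : Set.Icc (0:ℝ) 1) := Subtype.ext h1
      have hq : q.1 = (⟨0, by norm_num⟩ : Set.Icc (0:ℝ) 1) := Subtype.ext h2
      try dsimp only
      split_ifs <;> simp [hp, hq]
    · rfl)

open Classical in
/-- The hedgehog metric: `d((t,i),(s,j)) = |t - s|` if `i = j` and `t + s` otherwise.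
(It is defined via representatives; the formula does not depend on the choice of
representatives.) -/
noncomputable def hedgehogDist {I : Type u} (x y : Hedgehog I) : ℝ :=
  if x.out.2 = y.out.2 then |(x.out.1 : ℝ) - (y.out.1 : ℝ)|
  else (x.out.1 : ℝ) + (y.out.1 : ℝ)

/-- The metric hedgehog `MJ(κ)`: the hedgehog equipped with the hedgehog metric. -/
noncomputable def metricHedgehog (I : Type u) : MetricSpace (Hedgehog I) where
  dist := hedgehogDist
  dist_self := by
    intro x
    show hedgehogDist x x = 0
    unfold hedgehogDist
    rw [if_pos rfl, sub_self, abs_zero]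
  dist_comm := by
    intro x y
    show hedgehogDist x y = hedgehogDist y x
    unfold hedgehogDist
    rcases eq_or_ne x.out.2 y.out.2 with h | h
    · rw [if_pos h, if_pos h.symm, abs_sub_comm]
    · rw [if_neg h, if_neg (Ne.symm h), add_comm]
  dist_triangle := by
    intro x y z
    show hedgehogDist x z ≤ hedgehogDist x y + hedgehogDist y z
    unfold hedgehogDist
    have hx0 : (0:ℝ) ≤ x.out.1 := x.out.1.2.1
    have hy0 : (0:ℝ) ≤ y.out.1 := y.out.1.2.1
    have hz0 : (0:ℝ) ≤ z.out.1 := z.out.1.2.1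
    have hxy : |(x.out.1:ℝ) - y.out.1| ≤ (x.out.1:ℝ) + y.out.1 :=
      abs_le.mpr ⟨by linarith, by linarith⟩
    have hyz : |(y.out.1:ℝ) - z.out.1| ≤ (y.out.1:ℝ) + z.out.1 :=
      abs_le.mpr ⟨by linarith, by linarith⟩
    have hxz : |(x.out.1:ℝ) - z.out.1| ≤ (x.out.1:ℝ) + z.out.1 :=
      abs_le.mpr ⟨by linarith, by linarith⟩
    have htri := abs_sub_le (x.out.1:ℝ) (y.out.1:ℝ) (z.out.1:ℝ)
    have h1 := le_abs_self ((x.out.1:ℝ) - y.out.1)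
    have h2 := neg_abs_le ((x.out.1:ℝ) - y.out.1)
    have h3 := le_abs_self ((y.out.1:ℝ) - z.out.1)
    have h4 := neg_abs_le ((y.out.1:ℝ) - z.out.1)
    split_ifs <;> try linarith
    all_goals simp_all
  eq_of_dist_eq_zero := by
    intro x y h
    replace h : hedgehogDist x y = 0 := h
    unfold hedgehogDist at h
    have hx0 : (0:ℝ) ≤ x.out.1 := x.out.1.2.1
    have hy0 : (0:ℝ) ≤ y.out.1 := y.out.1.2.1
    rw [← Quotient.out_eq x, ← Quotient.out_eq y]
    split_ifs at h with hc
    · have h1 : (x.out.1:ℝ) = y.out.1 := by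
        have := abs_eq_zero.mp h
        linarith
      have : x.out = y.out := Prod.ext (Subtype.ext h1) hc
      rw [this]
    · exact Quotient.sound (Or.inl ⟨by linarith, by linarith⟩)

/-- The topology of the metric hedgehog `MJ(κ)`. -/
noncomputable def metricHedgehogTop (I : Type u) : TopologicalSpace (Hedgehog I) :=
  (metricHedgehog I).toUniformSpace.toTopologicalSpace

/-- The bijection `Φ` from the hedgehog onto the axes `L(κ)` of the cube `[0,1]^I`,
viewed as a map into the cube: `Φ(t,i)(j) = t` if `j = i` and `0` otherwise. -/
noncomputable def hedgehogPhi {I : Type u} : Hedgehog I → (I → Set.Icc (0:ℝ) 1) :=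
  fun x j => hedgehogProj j x

/-- The topology of the compact hedgehog `ΛJ(κ)`: the topology transported along `Φ`
from the subspace `L(κ)` of the Tychonoff cube `[0,1]^I`, i.e. the topology induced by `Φ`
from the product topology. -/
noncomputable def compactHedgehogTop (I : Type u) : TopologicalSpace (Hedgehog I) :=
  TopologicalSpace.induced hedgehogPhi inferInstance

/-- The weight of a topological space: the minimum cardinality of a basis of its topology. -/
noncomputable def weight (X : Type u) [TopologicalSpace X] : Cardinal.{u} :=
  sInf { c : Cardinal.{u} | ∃ B : Set (Set X), TopologicalSpace.IsTopologicalBasis B ∧ #B = c }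

/-- A family `A` of subsets of a topological space is discrete if every point has a
neighborhood meeting `A i` for at most one index `i`. -/
def IsDiscreteFamily {X : Type*} [TopologicalSpace X] {ι : Type*} (A : ι → Set X) : Prop :=
  ∀ x : X, ∃ N ∈ nhds x, { i | (A i ∩ N).Nonempty }.Subsingleton

/-- A set-indexed family of subsets of a topological space is discrete if every point has a
neighborhood meeting at most one member of the family. -/
def IsDiscreteSetFamily {X : Type*} [TopologicalSpace X] (𝒜 : Set (Set X)) : Prop :=
  ∀ x : X, ∃ N ∈ nhds x, { A ∈ 𝒜 | (A ∩ N).Nonempty }.Subsingleton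

/-- A topological space `X` is `κ`-collectionwise normal if every discrete family of closed
sets indexed by a set of cardinality `κ` can be separated by a pairwise disjoint family of
open sets. -/
def IsCollectionwiseNormalWrt (κ : Cardinal.{u}) (X : Type v) [TopologicalSpace X] : Prop :=
  ∀ (ι : Type u) (F : ι → Set X), #ι = κ → (∀ i, IsClosed (F i)) → IsDiscreteFamily F →
    ∃ U : ι → Set X, (∀ i, IsOpen (U i)) ∧ (Pairwise fun i j => Disjoint (U i) (U j)) ∧
      ∀ i, F i ⊆ U i

/-- A topological space is completely metrizable if its topology is induced by some
complete metric. -/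
def IsCompletelyMetrizable (X : Type*) [t : TopologicalSpace X] : Prop :=
  ∃ m : MetricSpace X, m.toUniformSpace.toTopologicalSpace = t ∧
    @CompleteSpace X m.toUniformSpace

/-!
Each coordinate `hedgehogProj i` of `Φ` is 1-Lipschitz for the hedgehog metric, so `Φ` is
continuous. Conversely `d(x, y)` is bounded by the sum of the coordinate distances at the two
spines of `x` and `y`, hence by twice the sup distance of `Φ x` and `Φ y`; with finitely many
spines the sup metric generates the product topology, so `Φ` is bi-Lipschitz onto its image
and the topologies agree. With infinitely many spines the tips `(1, j)` converge to `0` in the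
product topology along the cofinite filter, while all of them lie at distance `1` from `0`.
-/

open Filter

attribute [local instance] hedgehogSetoid metricHedgehog

section

variable {I : Type u}

@[simp]
theorem hedgehogProj_mk [DecidableEq I] (i : I) (p : Icc (0:ℝ) 1 × I) :
    hedgehogProj i ⟦p⟧ = if p.2 = i then p.1 else 0 := by
  simp only [hedgehogProj, Quotient.lift_mk]
  congr

open Classical in
/-- `hedgehogDist` reads the spine index of a representative chosen by `Quotient.out`, which is
arbitrary at height `0`; the formula does not depend on it there. -/
theorem hedgehogDist_mk (p q : Icc (0:ℝ) 1 × I) :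
    dist (⟦p⟧ : Hedgehog I) ⟦q⟧ =
      if p.2 = q.2 then |(p.1 : ℝ) - q.1| else p.1 + q.1 := by
  have hrep : ∀ {p p' q q' : Icc (0:ℝ) 1 × I}, p ≈ p' → q ≈ q' →
      (if p.2 = q.2 then |(p.1 : ℝ) - q.1| else p.1 + q.1) =
        if p'.2 = q'.2 then |(p'.1 : ℝ) - q'.1| else p'.1 + q'.1 := by
    rintro p p' q q' (⟨hp, hp'⟩ | rfl) (⟨hq, hq'⟩ | rfl) <;>
      split_ifs <;> simp_all [abs_of_nonneg, p.1.2.1, q.1.2.1]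
  exact hrep (Quotient.mk_out p) (Quotient.mk_out q)

open Classical in
theorem dist_hedgehogProj_le (i : I) (x y : Hedgehog I) :
    dist (hedgehogProj i x) (hedgehogProj i y) ≤ dist x y := by
  induction x, y using Quotient.inductionOn₂ with | h p q => ?_
  have hp := p.1.2.1
  have hq := q.1.2.1
  rw [hedgehogProj_mk, hedgehogProj_mk, hedgehogDist_mk, Subtype.dist_eq, Real.dist_eq]
  split_ifs <;> simp_all [abs_of_nonneg, add_nonneg]

theorem lipschitzWith_hedgehogProj (i : I) : LipschitzWith 1 (hedgehogProj (I := I) i) :=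
  .of_dist_le_mul fun x y => by simpa using dist_hedgehogProj_le i x y

open Classical in
theorem dist_le_dist_hedgehogProj_add (p q : Icc (0:ℝ) 1 × I) :
    dist (⟦p⟧ : Hedgehog I) ⟦q⟧ ≤
      dist (hedgehogProj p.2 ⟦p⟧) (hedgehogProj p.2 ⟦q⟧) +
        dist (hedgehogProj q.2 ⟦p⟧) (hedgehogProj q.2 ⟦q⟧) := by
  have hp := p.1.2.1
  have hq := q.1.2.1
  simp only [hedgehogProj_mk, hedgehogDist_mk, Subtype.dist_eq, Real.dist_eq]
  split_ifs <;> simp_all [abs_of_nonneg]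

theorem continuous_hedgehogPhi : Continuous (hedgehogPhi : Hedgehog I → I → Icc (0:ℝ) 1) :=
  continuous_pi fun i => (lipschitzWith_hedgehogProj i).continuous

theorem dist_le_two_mul_dist_hedgehogPhi [Fintype I] (x y : Hedgehog I) :
    dist x y ≤ 2 * dist (hedgehogPhi x) (hedgehogPhi y) := by
  induction x, y using Quotient.inductionOn₂ with | h p q => ?_
  calc dist (⟦p⟧ : Hedgehog I) ⟦q⟧
      ≤ dist (hedgehogProj p.2 ⟦p⟧) (hedgehogProj p.2 ⟦q⟧) +
          dist (hedgehogProj q.2 ⟦p⟧) (hedgehogProj q.2 ⟦q⟧) := dist_le_dist_hedgehogProj_add p q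
    _ ≤ 2 * dist (hedgehogPhi ⟦p⟧) (hedgehogPhi ⟦q⟧) :=
      (add_le_add (dist_le_pi_dist (hedgehogPhi ⟦p⟧) (hedgehogPhi (I := I) ⟦q⟧) p.2)
        (dist_le_pi_dist _ _ q.2)).trans_eq (two_mul _).symm

theorem isInducing_hedgehogPhi [Finite I] :
    IsInducing (hedgehogPhi : Hedgehog I → I → Icc (0:ℝ) 1) := by
  have := Fintype.ofFinite I
  exact (AntilipschitzWith.of_le_mul_dist (K := 2) fun x y => by
    exact_mod_cast dist_le_two_mul_dist_hedgehogPhi x y).isInducing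
    continuous_hedgehogPhi

theorem hedgehogPhi_mk_zero [DecidableEq I] (i : I) :
    hedgehogPhi (⟦(0, i)⟧ : Hedgehog I) = 0 := by
  ext j
  simp [hedgehogPhi]

theorem tendsto_hedgehogPhi_mk_one_cofinite (i : I) :
    Tendsto (fun j : I => hedgehogPhi (⟦(1, j)⟧ : Hedgehog I)) cofinite
      (𝓝 (hedgehogPhi (⟦(0, i)⟧ : Hedgehog I))) := by
  classical
  rw [hedgehogPhi_mk_zero, tendsto_pi_nhds]
  intro k
  refine tendsto_const_nhds.congr' ((eventually_cofinite_ne k).mono fun j hj => ?_)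
  simp [hedgehogPhi, hj]

theorem not_isInducing_hedgehogPhi [Infinite I] :
    ¬ IsInducing (hedgehogPhi : Hedgehog I → I → Icc (0:ℝ) 1) := by
  intro hΦ
  obtain ⟨i⟩ := ‹Infinite I›.nonempty
  have htips := hΦ.tendsto_nhds_iff.2 (tendsto_hedgehogPhi_mk_one_cofinite i)
  obtain ⟨j, hj⟩ := (Metric.tendsto_nhds.1 htips 1 one_pos).exists
  rw [hedgehogDist_mk] at hj
  split_ifs at hj <;> norm_num at hj

theorem isInducing_hedgehogPhi_iff :
    IsInducing (hedgehogPhi : Hedgehog I → I → Icc (0:ℝ) 1) ↔ Finite I :=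
  ⟨fun h => not_infinite_iff_finite.1 fun _ => not_isInducing_hedgehogPhi h,
    fun _ => isInducing_hedgehogPhi⟩

end

/-- The metric hedgehog topology is finer than the compact hedgehog topology, and they
coincide iff `κ < ℵ₀`. -/
theorem metricHedgehogTop_le_compactHedgehogTop (I : Type u) :
    metricHedgehogTop I ≤ compactHedgehogTop I ∧
      (metricHedgehogTop I = compactHedgehogTop I ↔ #I < Cardinal.aleph0) := by
  rw [Cardinal.lt_aleph0_iff_finite, ← isInducing_hedgehogPhi_iff, isInducing_iff]
  exact ⟨continuous_iff_le_induced.1 continuous_hedgehogPhi, Iff.rfl⟩
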